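/- Uniqueness of record positions: if every server builds its sequence by the deduplicating fold over the same delivery order D, then every record r that appears does so at the same index in every server's sequence, for servers that have processed enough of D to contain r. -/

import Mathlib

def dedupFold {α : Type} [DecidableEq α] (D : List α) : List α :=
  D.foldl (fun acc r => if r ∈ acc then acc else acc ++ [r]) []

theorem List.prefix_foldl_of_prefix_step {α β : Type*} {f : List β → α → List β}
    (hf : ∀ acc a, acc <+: f acc a) (l : List α) (acc : List β) : acc <+: l.foldl f acc := by
  induction l generalizing acc with
  | nil => exact List.prefix_refl acc
  | cons a t ih => exact (hf acc a).trans (ih (f acc a))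

theorem dedupFold_prefix_of_prefix {α : Type} [DecidableEq α] {l₁ l₂ : List α}
    (h : l₁ <+: l₂) : dedupFold l₁ <+: dedupFold l₂ := by
  obtain ⟨t, rfl⟩ := h
  rw [dedupFold, dedupFold, List.foldl_append]
  refine List.prefix_foldl_of_prefix_step (fun acc r => ?_) t _
  split
  · exact List.prefix_refl acc
  · exact List.prefix_append acc [r]

theorem dedupFold_index_unique {α : Type} [DecidableEq α]
    (D : List α) (k1 k2 : ℕ) (r : α)
    (h1 : r ∈ dedupFold (D.take k1)) (h2 : r ∈ dedupFold (D.take k2)) :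
    (dedupFold (D.take k1)).idxOf r = (dedupFold (D.take k2)).idxOf r := by
  rcases le_total k1 k2 with h | h
  · exact (dedupFold_prefix_of_prefix (List.take_prefix_take_left h)).idxOf_eq_of_mem h1
  · exact ((dedupFold_prefix_of_prefix (List.take_prefix_take_left h)).idxOf_eq_of_mem h2).symm
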